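/- Let T be a contraction on a complex Hilbert space H and let H_0 = {h ∈ H : ‖T^n h‖ = ‖h‖ = ‖(T*)^n h‖ for all n ≥ 1}. Then the restriction of T to H_0 is a unitary operator on H_0. -/

import Mathlib

open ContinuousLinearMap Filter
open scoped InnerProductSpace

noncomputable section

/-!
A contraction `A` that preserves the norm of `h` satisfies `A† A h = h`, since
`‖A† A h - h‖² = ‖A† A h‖² - 2 ‖A h‖² + ‖h‖² ≤ 0`. On the set `H₀` this gives `T† T = I`, and, as
`H₀` is symmetric in `T` and `T†`, also `T T† = I`; the shift of exponents `T^n (T h) = T^(n+1) h`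
and `T†^(n+1) (T h) = T†^n h` shows that `T` and `T†` map `H₀` into itself.
-/

namespace ContinuousLinearMap

variable {𝕜 E F : Type*} [RCLike 𝕜]
  [NormedAddCommGroup E] [InnerProductSpace 𝕜 E] [CompleteSpace E]
  [NormedAddCommGroup F] [InnerProductSpace 𝕜 F] [CompleteSpace F]

theorem adjoint_apply_apply_of_norm_apply_eq {A : E →L[𝕜] F} (hA : ‖A‖ ≤ 1) {h : E}
    (hh : ‖A h‖ = ‖h‖) : adjoint A (A h) = h := by
  have hle : ‖adjoint A (A h)‖ ≤ ‖h‖ := by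
    calc ‖adjoint A (A h)‖ ≤ ‖adjoint A‖ * ‖A h‖ := (adjoint A).le_opNorm _
      _ ≤ 1 * ‖h‖ := by rw [adjoint.norm_map, hh]; gcongr
      _ = ‖h‖ := one_mul _
  have hre : RCLike.re ⟪adjoint A (A h), h⟫_𝕜 = ‖h‖ ^ 2 := by
    rw [adjoint_inner_left, inner_self_eq_norm_sq (𝕜 := 𝕜), hh]
  have hsq : ‖adjoint A (A h) - h‖ ^ 2 ≤ 0 := by
    rw [norm_sub_sq (𝕜 := 𝕜), hre]
    nlinarith [norm_nonneg h, norm_nonneg (adjoint A (A h))]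
  rw [← sub_eq_zero, ← norm_eq_zero]
  exact pow_eq_zero_iff two_ne_zero |>.mp (le_antisymm hsq (sq_nonneg _))

/-- The space `H₀`; allowing the exponent `n = 0` changes nothing. -/
def unitaryPart (T : E →L[𝕜] E) : Set E :=
  {h | ∀ n : ℕ, ‖(T ^ n) h‖ = ‖h‖ ∧ ‖(adjoint T ^ n) h‖ = ‖h‖}

variable {T : E →L[𝕜] E} {h : E}

theorem setOf_forall_one_le_eq_unitaryPart (T : E →L[𝕜] E) :
    {h : E | ∀ n : ℕ, 1 ≤ n → ‖(T ^ n) h‖ = ‖h‖ ∧ ‖(adjoint T ^ n) h‖ = ‖h‖} =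
      unitaryPart T := by
  ext h
  refine ⟨fun hh n => ?_, fun hh n _ => hh n⟩
  rcases Nat.eq_zero_or_pos n with rfl | hn
  · simp
  · exact hh n hn

theorem unitaryPart_adjoint (T : E →L[𝕜] E) : unitaryPart (adjoint T) = unitaryPart T := by
  ext h
  simp only [unitaryPart, adjoint_adjoint, Set.mem_ofPred_eq, and_comm]

theorem norm_apply_of_mem_unitaryPart (hh : h ∈ unitaryPart T) : ‖T h‖ = ‖h‖ := by
  simpa using (hh 1).1

theorem adjoint_apply_apply_of_mem_unitaryPart (hT : ‖T‖ ≤ 1) (hh : h ∈ unitaryPart T) :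
    adjoint T (T h) = h :=
  adjoint_apply_apply_of_norm_apply_eq hT (norm_apply_of_mem_unitaryPart hh)

theorem apply_adjoint_apply_of_mem_unitaryPart (hT : ‖T‖ ≤ 1) (hh : h ∈ unitaryPart T) :
    T (adjoint T h) = h := by
  have hT' : ‖adjoint T‖ ≤ 1 := by rwa [adjoint.norm_map]
  rw [← unitaryPart_adjoint] at hh
  simpa only [adjoint_adjoint] using adjoint_apply_apply_of_mem_unitaryPart hT' hh

theorem apply_mem_unitaryPart (hT : ‖T‖ ≤ 1) (hh : h ∈ unitaryPart T) :
    T h ∈ unitaryPart T := by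
  intro n
  rw [norm_apply_of_mem_unitaryPart hh]
  refine ⟨by rw [← mul_apply_eq_comp, ← pow_succ]; exact (hh (n + 1)).1, ?_⟩
  rcases n with _ | m
  · simp [norm_apply_of_mem_unitaryPart hh]
  · rw [pow_succ, mul_apply_eq_comp, adjoint_apply_apply_of_mem_unitaryPart hT hh]
    exact (hh m).2

theorem adjoint_apply_mem_unitaryPart (hT : ‖T‖ ≤ 1) (hh : h ∈ unitaryPart T) :
    adjoint T h ∈ unitaryPart T := by
  rw [← unitaryPart_adjoint] at hh ⊢
  exact apply_mem_unitaryPart (by rwa [adjoint.norm_map]) hh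

end ContinuousLinearMap

theorem restriction_to_unitary_part_is_unitary
    {H : Type*} [NormedAddCommGroup H] [InnerProductSpace ℂ H] [CompleteSpace H]
    (T : H →L[ℂ] H) (hT : ‖T‖ ≤ 1)
    (S : Set H)
    (hS : S = {h : H | ∀ n : ℕ, 1 ≤ n →
        ‖(T ^ n) h‖ = ‖h‖ ∧ ‖((adjoint T) ^ n) h‖ = ‖h‖}) :
    (∀ h ∈ S, T h ∈ S ∧ ‖T h‖ = ‖h‖) ∧ (∀ h ∈ S, ∃ g ∈ S, T g = h) := by
  rw [hS, setOf_forall_one_le_eq_unitaryPart]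
  exact ⟨fun h hh => ⟨apply_mem_unitaryPart hT hh, norm_apply_of_mem_unitaryPart hh⟩,
    fun h hh => ⟨adjoint T h, adjoint_apply_mem_unitaryPart hT hh,
      apply_adjoint_apply_of_mem_unitaryPart hT hh⟩⟩
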